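/- K₁ is strictly included in K₂: every session process in K₁ is in K₂, and there exists a session process in K₂ that is not in K₁; in particular, P₂ = (νa₁b₁)(νa₂b₂)(a₁(x).ā₂⟨x⟩ | b̄₁⟨n⟩.b₂(z)) lies in K₂ \ K₁. -/

import Mathlib

namespace Paper

abbrev Name := ℕ
abbrev Label := ℕ

/-! ## Session π-calculus: syntax -/

inductive SProc : Type where
  | nil : SProc
  | output : Name → Name → SProc → SProc
  | input : Name → Name → SProc → SProc
  | select : Name → Label → SProc → SProc
  | branch : Name → Finset Label → (Label → SProc) → SProc
  | par : SProc → SProc → SProc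
  | res : Name → Name → SProc → SProc

namespace SProc

/-- Free names. -/
def fn : SProc → Set Name
  | nil => ∅
  | output x v P => {x, v} ∪ P.fn
  | input x y P => {x} ∪ (P.fn \ {y})
  | select x _ P => {x} ∪ P.fn
  | branch x I Ps => {x} ∪ ⋃ i ∈ I, (Ps i).fn
  | par P Q => P.fn ∪ Q.fn
  | res x y P => P.fn \ {x, y}

/-- Renaming of a single name. -/
def rn (v z a : Name) : Name := if a = z then v else a

/-- Substitution `P[v/z]` of the name `v` for the name `z`. -/
def subst (v z : Name) : SProc → SProc
  | nil => nil
  | output x w P => output (rn v z x) (rn v z w) (P.subst v z)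
  | input x y P => input (rn v z x) y (if y = z then P else P.subst v z)
  | select x l P => select (rn v z x) l (P.subst v z)
  | branch x I Ps => branch (rn v z x) I (fun i => (Ps i).subst v z)
  | par P Q => par (P.subst v z) (Q.subst v z)
  | res a b P => res a b (if z = a ∨ z = b then P else P.subst v z)

end SProc

/-- Structural congruence for the session π-calculus. -/
inductive SC : SProc → SProc → Prop where
  | refl (P) : SC P P
  | symm : SC P Q → SC Q P
  | trans : SC P Q → SC Q R → SC P R
  | parComm (P Q) : SC (.par P Q) (.par Q P)
  | parAssoc (P Q R) : SC (.par (.par P Q) R) (.par P (.par Q R))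
  | parNil (P) : SC (.par P .nil) P
  | resPar (x y : Name) (P Q) : x ∉ Q.fn → y ∉ Q.fn →
      SC (.par (.res x y P) Q) (.res x y (.par P Q))
  | resNil (x y) : SC (.res x y .nil) .nil
  | resComm (x y a b P) : SC (.res x y (.res a b P)) (.res a b (.res x y P))
  | parCong : SC P P' → SC Q Q' → SC (.par P Q) (.par P' Q')
  | resCong (x y) : SC P Q → SC (.res x y P) (.res x y Q)

/-- Reduction for the session π-calculus. -/
inductive SRed : SProc → SProc → Prop where
  | com (x y v z : Name) (P Q) :
      SRed (.res x y (.par (.output x v P) (.input y z Q)))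
           (.res x y (.par P (Q.subst v z)))
  | case (x y : Name) (j : Label) (I : Finset Label) (P) (Ps : Label → SProc) :
      j ∈ I →
      SRed (.res x y (.par (.select x j P) (.branch y I Ps)))
           (.res x y (.par P (Ps j)))
  | par : SRed P Q → SRed (.par P R) (.par Q R)
  | res (x y) : SRed P Q → SRed (.res x y P) (.res x y Q)
  | str : SC P P' → SRed P' Q' → SC Q' Q → SRed P Q

/-! ## Session types -/

inductive SType : Type where
  | endT : SType
  | recv : SType → SType → SType        -- ?T.S
  | send : SType → SType → SType        -- !T.S
  | branchT : Finset Label → (Label → SType) → SType   -- &{l_i : S_i}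
  | selectT : Finset Label → (Label → SType) → SType   -- ⊕{l_i : S_i}

/-- Session type duality. -/
def SType.dual : SType → SType
  | .endT => .endT
  | .recv T S => .send T S.dual
  | .send T S => .recv T S.dual
  | .branchT I S => .selectT I (fun i => (S i).dual)
  | .selectT I S => .branchT I (fun i => (S i).dual)

/-- Session typing contexts. -/
abbrev Ctx := Name → Option SType

def Ctx.update (Γ : Ctx) (x : Name) (T : Option SType) : Ctx :=
  fun y => if y = x then T else Γ y

/-- The context splitting operation Γ = Γ₁ ∘ Γ₂: every assignment goes to exactly one side. -/
def Ctx.split (Γ Γ₁ Γ₂ : Ctx) : Prop :=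
  ∀ x, (Γ₁ x = Γ x ∧ Γ₂ x = none) ∨ (Γ₂ x = Γ x ∧ Γ₁ x = none)

/-- A context in which every declared channel has the terminated type `end`. -/
def Ctx.terminated (Γ : Ctx) : Prop := ∀ x T, Γ x = some T → T = SType.endT

/-- Vasconcelos' session typing judgement Γ ⊢_ST P. -/
inductive STyped : Ctx → SProc → Prop where
  | nil : Ctx.terminated Γ → STyped Γ .nil
  | par : Ctx.split Γ Γ₁ Γ₂ → STyped Γ₁ P → STyped Γ₂ Q → STyped Γ (.par P Q)
  | res (x y : Name) (T : SType) : Γ x = none → Γ y = none → x ≠ y →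
      STyped ((Γ.update x (some T)).update y (some T.dual)) P →
      STyped Γ (.res x y P)
  | input (x y : Name) (T S : SType) :
      Γ x = some (.recv T S) → y ≠ x → Γ y = none →
      STyped ((Γ.update x (some S)).update y (some T)) P →
      STyped Γ (.input x y P)
  | output (x v : Name) (T S : SType) :
      Γ x = some (.send T S) → v ≠ x → Γ v = some T →
      STyped ((Γ.update x (some S)).update v none) P →
      STyped Γ (.output x v P)
  | select (x : Name) (j : Label) (I : Finset Label) (S : Label → SType) :
      Γ x = some (.selectT I S) → j ∈ I →
      STyped (Γ.update x (some (S j))) P →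
      STyped Γ (.select x j P)
  | branch (x : Name) (I : Finset Label) (S : Label → SType) (Ps : Label → SProc) :
      Γ x = some (.branchT I S) →
      (∀ i ∈ I, STyped (Γ.update x (some (S i))) (Ps i)) →
      STyped Γ (.branch x I Ps)

/-! ## Well-formedness -/

/-- A sequence of double restrictions (ν x̃ỹ). -/
def resSeq : List (Name × Name) → SProc → SProc
  | [], P => P
  | (x, y) :: L, P => .res x y (resSeq L P)

inductive PrefixKind : Type where
  | inp | out | sel | bra

/-- The subject and kind of the topmost prefix of a process, if any. -/
def SProc.prefixKind : SProc → Option (Name × PrefixKind)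
  | .output x _ _ => some (x, .out)
  | .input x _ _ => some (x, .inp)
  | .select x _ _ => some (x, .sel)
  | .branch x _ _ => some (x, .bra)
  | _ => none

/-- Well-formedness for session processes (Definition of well-formed processes). -/
def WellFormed (Rp : SProc) : Prop :=
  ∀ (L : List (Name × Name)) (P Q : SProc), SC Rp (resSeq L (.par P Q)) →
    (∀ x kP kQ, P.prefixKind = some (x, kP) → Q.prefixKind = some (x, kQ) → kP = kQ) ∧
    (∀ x y kP kQ, (x, y) ∈ L →
      P.prefixKind = some (x, kP) → Q.prefixKind = some (y, kQ) →
      ∃ R', SRed (.par P Q) R')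

end Paper

namespace Paper

/-! ## Standard π-calculus with variant values -/

inductive Val : Type where
  | ch : Name → Val
  | variant : Label → Val → Val

def Val.fv : Val → Set Name
  | .ch x => {x}
  | .variant _ v => v.fv

/-- Substitution on values. -/
def Val.vsubst (v : Val) (z : Name) : Val → Val
  | .ch x => if x = z then v else .ch x
  | .variant l w => .variant l (Val.vsubst v z w)

/-- Substituting a value in subject (channel) position. -/
def Val.asSubject (v : Val) (z x : Name) : Name :=
  if x = z then (match v with | .ch a => a | _ => x) else x

inductive PProc : Type where
  | nil : PProc
  | output : Name → List Val → PProc → PProc       -- x̄⟨ṽ⟩.P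
  | input : Name → List Name → PProc → PProc       -- x(z̃).P
  | par : PProc → PProc → PProc
  | res : Name → PProc → PProc
  | pcase : Val → Finset Label → (Label → Name) → (Label → PProc) → PProc
      -- case v of {l_i(x_i) ▷ P_i}

namespace PProc

def fn : PProc → Set Name
  | nil => ∅
  | output x vs P => {x} ∪ (⋃ v ∈ vs, Val.fv v) ∪ P.fn
  | input x zs P => {x} ∪ (P.fn \ {a | a ∈ zs})
  | par P Q => P.fn ∪ Q.fn
  | res x P => P.fn \ {x}
  | pcase v I xs Ps => v.fv ∪ ⋃ i ∈ I, ((Ps i).fn \ {xs i})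

/-- Substitution `P[v/z]` of a value for a name. -/
def psubst (v : Val) (z : Name) : PProc → PProc
  | nil => nil
  | output x vs P => output (v.asSubject z x) (vs.map (Val.vsubst v z)) (P.psubst v z)
  | input x zs P => input (v.asSubject z x) zs (if z ∈ zs then P else P.psubst v z)
  | par P Q => par (P.psubst v z) (Q.psubst v z)
  | res a P => res a (if a = z then P else P.psubst v z)
  | pcase w I xs Ps =>
      pcase (Val.vsubst v z w) I xs (fun i => if xs i = z then Ps i else (Ps i).psubst v z)

/-- Simultaneous (here: iterated) substitution `P[ṽ/z̃]`. -/
def psubstList (zs : List Name) (vs : List Val) (P : PProc) : PProc :=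
  (zs.zip vs).foldl (fun acc p => acc.psubst p.2 p.1) P

end PProc

inductive PSC : PProc → PProc → Prop where
  | refl (P) : PSC P P
  | symm : PSC P Q → PSC Q P
  | trans : PSC P Q → PSC Q R → PSC P R
  | parComm (P Q) : PSC (.par P Q) (.par Q P)
  | parAssoc (P Q R) : PSC (.par (.par P Q) R) (.par P (.par Q R))
  | parNil (P) : PSC (.par P .nil) P
  | resPar (x : Name) (P Q) : x ∉ Q.fn → PSC (.par (.res x P) Q) (.res x (.par P Q))
  | resNil (x) : PSC (.res x .nil) .nil
  | resComm (x y P) : PSC (.res x (.res y P)) (.res y (.res x P))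
  | parCong : PSC P P' → PSC Q Q' → PSC (.par P Q) (.par P' Q')
  | resCong (x) : PSC P Q → PSC (.res x P) (.res x Q)

inductive PRed : PProc → PProc → Prop where
  | com (x : Name) (vs : List Val) (zs : List Name) (P Q) :
      vs.length = zs.length →
      PRed (.par (.output x vs P) (.input x zs Q)) (.par P (PProc.psubstList zs vs Q))
  | case (j : Label) (v : Val) (I : Finset Label) (xs : Label → Name) (Ps : Label → PProc) :
      j ∈ I →
      PRed (.pcase (.variant j v) I xs Ps) ((Ps j).psubst v (xs j))
  | par : PRed P Q → PRed (.par P R) (.par Q R)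
  | res (x) : PRed P Q → PRed (.res x P) (.res x Q)
  | str : PSC P P' → PRed P' Q' → PSC Q' Q → PRed P Q

/-! ## Usages and usage types (Kobayashi) -/

inductive Usage : Type where
  | empty : Usage
  | inp : ℕ → ℕ → Usage → Usage      -- ?ᵒ_κ.U
  | out : ℕ → ℕ → Usage → Usage      -- !ᵒ_κ.U
  | par : Usage → Usage → Usage

namespace Usage

/-- Structural congruence on usages. -/
inductive UCong : Usage → Usage → Prop where
  | refl (U) : UCong U U
  | symm : UCong U V → UCong V U
  | trans : UCong U V → UCong V W → UCong U W
  | comm (U V) : UCong (.par U V) (.par V U)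
  | assoc (U V W) : UCong (.par (.par U V) W) (.par U (.par V W))
  | unit (U) : UCong (.par U .empty) U
  | parCong : UCong U U' → UCong V V' → UCong (.par U V) (.par U' V')

/-- Usage reduction: a matched input/output pair is consumed. -/
inductive URed : Usage → Usage → Prop where
  | comm (o κ o' κ' : ℕ) (U₁ U₂) :
      URed (.par (.inp o κ U₁) (.out o' κ' U₂)) (.par U₁ U₂)
  | parL : URed U U' → URed (.par U V) (.par U' V)
  | str : UCong U U₁ → URed U₁ U₂ → UCong U₂ U' → URed U U'

/-- Input obligation level. -/
noncomputable def obIn : Usage → ℕ∞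
  | .empty => ⊤
  | .inp o _ _ => (o : ℕ∞)
  | .out _ _ _ => ⊤
  | .par U V => min U.obIn V.obIn

/-- Output obligation level. -/
noncomputable def obOut : Usage → ℕ∞
  | .empty => ⊤
  | .inp _ _ _ => ⊤
  | .out o _ _ => (o : ℕ∞)
  | .par U V => min U.obOut V.obOut

/-- Input capability level. -/
noncomputable def capIn : Usage → ℕ∞
  | .empty => ⊤
  | .inp _ κ _ => (κ : ℕ∞)
  | .out _ _ _ => ⊤
  | .par U V => min U.capIn V.capIn

/-- Output capability level. -/
noncomputable def capOut : Usage → ℕ∞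
  | .empty => ⊤
  | .inp _ _ _ => ⊤
  | .out _ κ _ => (κ : ℕ∞)
  | .par U V => min U.capOut V.capOut

/-- con(U): each capability is matched by a co-obligation of lower or equal level. -/
def con (U : Usage) : Prop := U.obOut ≤ U.capIn ∧ U.obIn ≤ U.capOut

/-- Reliability of a usage. -/
def rel (U : Usage) : Prop := ∀ U', Relation.ReflTransGen URed U U' → con U'

/-- Lifting the obligation levels of the topmost actions up to `t`. -/
def lift (t : ℕ) : Usage → Usage
  | .empty => .empty
  | .inp o κ U => .inp (max o t) κ U
  | .out o κ U => .out (max o t) κ U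
  | .par U V => .par (U.lift t) (V.lift t)

/-- A usage offering no behaviour at all. -/
def noUse : Usage → Prop
  | .empty => True
  | .par U V => U.noUse ∧ V.noUse
  | _ => False

end Usage

inductive UType : Type where
  | chan : Usage → List UType → UType            -- U[T̃]
  | variant : Finset Label → (Label → UType) → UType  -- ⟨l_i : T_i⟩

/-- Composition of usage types: (U₁|U₂)[T̃] from U₁[T̃] and U₂[T̃];
equal variant types compose to themselves. -/
inductive CompT : UType → UType → UType → Prop where
  | chan (U₁ U₂ : Usage) (Ts : List UType) :
      CompT (.chan U₁ Ts) (.chan U₂ Ts) (.chan (.par U₁ U₂) Ts)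
  | variant (I : Finset Label) (Ts : Label → UType) :
      CompT (.variant I Ts) (.variant I Ts) (.variant I Ts)

def UType.lift (t : ℕ) : UType → UType
  | .chan U Ts => .chan (U.lift t) Ts
  | .variant I Ts => .variant I Ts

abbrev UCtx := Name → Option UType

def UCtx.update (Γ : UCtx) (x : Name) (T : Option UType) : UCtx :=
  fun y => if y = x then T else Γ y

def UCtx.empty : UCtx := fun _ => none

/-- Context composition Γ = Γ₁ | Γ₂. -/
def CompC (Γ₁ Γ₂ Γ : UCtx) : Prop :=
  ∀ x, (Γ₁ x = none ∧ Γ₂ x = none ∧ Γ x = none) ∨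
       (∃ T, Γ₁ x = some T ∧ Γ₂ x = none ∧ Γ x = some T) ∨
       (∃ T, Γ₁ x = none ∧ Γ₂ x = some T ∧ Γ x = some T) ∨
       (∃ T₁ T₂ T, Γ₁ x = some T₁ ∧ Γ₂ x = some T₂ ∧ CompT T₁ T₂ T ∧ Γ x = some T)

def UCtx.lift (t : ℕ) (Γ : UCtx) : UCtx := fun x => (Γ x).map (UType.lift t)

/-- The usage of `x` in Γ (∅ if `x` is not a channel of Γ). -/
def UCtx.usageAt (Γ : UCtx) (x : Name) : Usage :=
  match Γ x with
  | some (.chan U _) => U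
  | _ => .empty

/-- The carried types of `x` in Γ, if declared, agree with `Ts`. -/
def UCtx.carriesOK (Γ : UCtx) (x : Name) (Ts : List UType) : Prop :=
  ∀ U Ts', Γ x = some (.chan U Ts') → Ts' = Ts

/-- The context x:αᵒ_κ[T̃] ; Γ. -/
def seqCtx (x : Name) (isInp : Bool) (o κ : ℕ) (Ts : List UType) (Γ : UCtx) : UCtx :=
  fun y =>
    if y = x then some (.chan ((if isInp then Usage.inp else Usage.out) o κ (Γ.usageAt x)) Ts)
    else (Γ y).map (UType.lift (κ + 1))

def UCtx.extendList (Γ : UCtx) (zs : List Name) (Ts : List UType) : UCtx :=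
  (zs.zip Ts).foldl (fun Δ p => Δ.update p.1 (some p.2)) Γ

/-- The set of channels shared by two contexts. -/
def UCtx.shared (Γ₁ Γ₂ : UCtx) : Set Name := {x | Γ₁ x ≠ none ∧ Γ₂ x ≠ none}

/-- Typing of values. -/
inductive VTyped : UCtx → Val → UType → Prop where
  | ch (x : Name) (T : UType) :
      Γ x = some T → (∀ y, y ≠ x → Γ y = none) → VTyped Γ (.ch x) T
  | variant (j : Label) (I : Finset Label) (Ts : Label → UType) :
      j ∈ I → VTyped Γ v (Ts j) → VTyped Γ (.variant j v) (.variant I Ts)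

inductive VTypedList : UCtx → List Val → List UType → Prop where
  | nil : (∀ x, Γ x = none) → VTypedList Γ [] []
  | cons : CompC Γ₁ Γ₂ Γ → VTyped Γ₁ v T → VTypedList Γ₂ vs Ts →
      VTypedList Γ (v :: vs) (T :: Ts)

/-- Kobayashi's usage typing Γ ⊢ⁿ_KB P, with the explicit degree of sharing `n`
in the rule for parallel composition. -/
inductive KBTyped (n : ℕ) : UCtx → PProc → Prop where
  | nil : (∀ x T, Γ x = some T → ∃ U Ts, T = UType.chan U Ts ∧ U.noUse) →
      KBTyped n Γ .nil
  | input (x : Name) (zs : List Name) (o κ : ℕ) (Ts : List UType) :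
      zs.Nodup → x ∉ zs → (∀ z ∈ zs, Γ z = none) → zs.length = Ts.length →
      Γ.carriesOK x Ts →
      KBTyped n (Γ.extendList zs Ts) P →
      KBTyped n (seqCtx x true o κ Ts Γ) (.input x zs P)
  | output (x : Name) (vs : List Val) (o κ : ℕ) (Ts : List UType) :
      VTypedList Γ₁ vs Ts → KBTyped n Γ₂ P → CompC Γ₁ Γ₂ Γ →
      Γ.carriesOK x Ts →
      KBTyped n (seqCtx x false o κ Ts Γ) (.output x vs P)
  | par : CompC Γ₁ Γ₂ Γ →
      (UCtx.shared Γ₁ Γ₂).Finite → (UCtx.shared Γ₁ Γ₂).ncard ≤ n →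
      KBTyped n Γ₁ P → KBTyped n Γ₂ Q →
      KBTyped n Γ (.par P Q)
  | res (x : Name) (U : Usage) (Ts : List UType) :
      Γ x = none → Usage.rel U →
      KBTyped n (Γ.update x (some (.chan U Ts))) P →
      KBTyped n Γ (.res x P)
  | pcase (v : Val) (I : Finset Label) (xs : Label → Name) (Ps : Label → PProc)
      (Ts : Label → UType) :
      VTyped Γ₁ v (.variant I Ts) → CompC Γ₁ Γ₂ Γ →
      (∀ i ∈ I, Γ₂ (xs i) = none) →
      (∀ i ∈ I, KBTyped n (Γ₂.update (xs i) (some (Ts i))) (Ps i)) →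
      KBTyped n Γ (.pcase v I xs Ps)

/-- Reduction of typing contexts: the usage of one channel reduces (or nothing happens). -/
inductive UCtxRed : UCtx → UCtx → Prop where
  | refl (Γ) : UCtxRed Γ Γ
  | step (x : Name) (U U' : Usage) (Ts : List UType) :
      Γ x = some (.chan U Ts) → Usage.URed U U' →
      UCtxRed Γ (Γ.update x (some (.chan U' Ts)))

/-! ## Deadlock freedom for the standard π-calculus -/

def resSeqP : List Name → PProc → PProc
  | [], P => P
  | x :: L, P => .res x (resSeqP L P)

/-- A communication on channel `x` is enabled at top level. -/
def CommEnabledOn (x : Name) (P : PProc) : Prop :=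
  ∃ (L : List Name) (vs : List Val) (zs : List Name) (Q R S : PProc),
    PSC P (resSeqP L (.par (.output x vs Q) (.par (.input x zs R) S)))

/-- The step from `P` to `P'` fires a communication on channel `x`. -/
def CommStepOn (x : Name) (P P' : PProc) : Prop :=
  ∃ (L : List Name) (vs : List Val) (zs : List Name) (Q R S : PProc),
    PSC P (resSeqP L (.par (.output x vs Q) (.par (.input x zs R) S))) ∧
    PSC P' (resSeqP L (.par Q (.par (PProc.psubstList zs vs R) S)))

/-- Maximal (possibly terminating, then stuttering) reduction sequences. -/
def PMaxSeq (s : ℕ → PProc) : Prop :=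
  ∀ i, PRed (s i) (s (i + 1)) ∨ (s (i + 1) = s i ∧ ∀ Q, ¬ PRed (s i) Q)

/-- Fairness: a communication that stays enabled forever is eventually performed. -/
def PFairSeq (s : ℕ → PProc) : Prop :=
  ∀ i x, (∀ j, i ≤ j → CommEnabledOn x (s j)) → ∃ j, i ≤ j ∧ CommStepOn x (s j) (s (j + 1))

/-- Deadlock freedom for the standard π-calculus (Kobayashi-style): every active
output or input prefix is eventually consumed, along any fair maximal reduction
sequence. -/
def PDeadlockFree (P₀ : PProc) : Prop :=
  ∀ s : ℕ → PProc, s 0 = P₀ → PMaxSeq s → PFairSeq s →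
    (∀ i (L : List Name) (x : Name) (vs : List Val) (Q R : PProc),
      PSC (s i) (resSeqP L (.par (.output x vs Q) R)) →
      ∃ k, i ≤ k ∧ ∃ (zs : List Name) (R₁ R₂ : PProc),
        PSC (s k) (resSeqP L (.par (.output x vs Q) (.par (.input x zs R₁) R₂))) ∧
        PSC (s (k + 1)) (resSeqP L (.par Q (.par (PProc.psubstList zs vs R₁) R₂)))) ∧
    (∀ i (L : List Name) (x : Name) (zs : List Name) (Q R : PProc),
      PSC (s i) (resSeqP L (.par (.input x zs Q) R)) →
      ∃ k, i ≤ k ∧ ∃ (vs : List Val) (R₁ R₂ : PProc),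
        PSC (s k) (resSeqP L (.par (.input x zs Q) (.par (.output x vs R₁) R₂))) ∧
        PSC (s (k + 1)) (resSeqP L (.par (PProc.psubstList zs vs Q) (.par R₁ R₂))))

end Paper

namespace Paper

/-! ## Deadlock freedom for the session π-calculus -/

/-- A session communication on the endpoint pair (x,y) is enabled. -/
def SCommEnabled (x y : Name) (P : SProc) : Prop :=
  (∃ (L : List (Name × Name)) (v z : Name) (Q R S : SProc),
    SC P (resSeq L (.par (.output x v Q) (.par (.input y z R) S))) ∧ (x, y) ∈ L) ∨
  (∃ (L : List (Name × Name)) (j : Label) (I : Finset Label) (Q S : SProc)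
     (Rs : Label → SProc),
    j ∈ I ∧ SC P (resSeq L (.par (.select x j Q) (.par (.branch y I Rs) S))) ∧ (x, y) ∈ L)

/-- The step from `P` to `P'` fires a session communication on (x,y). -/
def SCommStep (x y : Name) (P P' : SProc) : Prop :=
  (∃ (L : List (Name × Name)) (v z : Name) (Q R S : SProc),
    SC P (resSeq L (.par (.output x v Q) (.par (.input y z R) S))) ∧ (x, y) ∈ L ∧
    SC P' (resSeq L (.par Q (.par (R.subst v z) S)))) ∨
  (∃ (L : List (Name × Name)) (j : Label) (I : Finset Label) (Q S : SProc)
     (Rs : Label → SProc),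
    j ∈ I ∧ SC P (resSeq L (.par (.select x j Q) (.par (.branch y I Rs) S))) ∧ (x, y) ∈ L ∧
    SC P' (resSeq L (.par Q (.par (Rs j) S))))

def SMaxSeq (s : ℕ → SProc) : Prop :=
  ∀ i, SRed (s i) (s (i + 1)) ∨ (s (i + 1) = s i ∧ ∀ Q, ¬ SRed (s i) Q)

def SFairSeq (s : ℕ → SProc) : Prop :=
  ∀ i x y, (∀ j, i ≤ j → SCommEnabled x y (s j)) →
    ∃ j, i ≤ j ∧ SCommStep x y (s j) (s (j + 1))

/-- Deadlock freedom for the session π-calculus: every active output prefix and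
every active selection prefix is eventually consumed along any fair maximal
reduction sequence (the input/branching cases being symmetric). -/
def SDeadlockFree (P₀ : SProc) : Prop :=
  ∀ s : ℕ → SProc, s 0 = P₀ → SMaxSeq s → SFairSeq s →
    (∀ i (L : List (Name × Name)) (x v : Name) (Q R : SProc),
      SC (s i) (resSeq L (.par (.output x v Q) R)) →
      ∃ k, i ≤ k ∧ ∃ (L' : List (Name × Name)) (y z : Name) (R₁ R₂ : SProc),
        SC (s k) (resSeq L' (.par (.output x v Q) (.par (.input y z R₁) R₂))) ∧
        SC (s (k + 1)) (resSeq L' (.par Q (.par (R₁.subst v z) R₂)))) ∧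
    (∀ i (L : List (Name × Name)) (x : Name) (j : Label) (Q R : SProc),
      SC (s i) (resSeq L (.par (.select x j Q) R)) →
      ∃ k, i ≤ k ∧ ∃ (L' : List (Name × Name)) (y : Name) (I : Finset Label)
        (Rs : Label → SProc) (S : SProc),
        SC (s k) (resSeq L' (.par (.select x j Q) (.par (.branch y (insert j I) Rs) S))) ∧
        SC (s (k + 1)) (resSeq L' (.par Q (.par (Rs j) S))))

/-! ## Continuation-passing encoding of session processes into π-processes -/

/-- Updating the renaming function of the encoding: f, x ↦ c. -/
def fupd (f : Name → Name) (x c : Name) : Name → Name :=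
  fun y => if y = x then c else f y

/-- The continuation-passing style encoding ⟦·⟧_f of session processes into
standard π-calculus processes (Dardha et al.), as a relation (the fresh
continuation names are chosen nondeterministically). -/
inductive Enc : (Name → Name) → SProc → PProc → Prop where
  | nil (f) : Enc f .nil .nil
  | output (f) (x v c : Name) (P : SProc) (Q : PProc) :
      c ∉ f '' (SProc.fn (.output x v P)) → c ∉ SProc.fn (.output x v P) →
      Enc (fupd f x c) P Q →
      Enc f (.output x v P) (.res c (.output (f x) [.ch v, .ch c] Q))
  | input (f) (x y c : Name) (P : SProc) (Q : PProc) :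
      c ∉ f '' (SProc.fn (.input x y P)) → c ∉ SProc.fn (.input x y P) → c ≠ y →
      Enc (fupd f x c) P Q →
      Enc f (.input x y P) (.input (f x) [y, c] Q)
  | select (f) (x c : Name) (j : Label) (P : SProc) (Q : PProc) :
      c ∉ f '' (SProc.fn (.select x j P)) → c ∉ SProc.fn (.select x j P) →
      Enc (fupd f x c) P Q →
      Enc f (.select x j P) (.res c (.output (f x) [.variant j (.ch c)] Q))
  | branch (f) (x y c : Name) (I : Finset Label) (Ps : Label → SProc)
      (Qs : Label → PProc) :
      c ∉ f '' (SProc.fn (.branch x I Ps)) → c ∉ SProc.fn (.branch x I Ps) →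
      y ∉ f '' (SProc.fn (.branch x I Ps)) → y ≠ c →
      (∀ i ∈ I, Enc (fupd f x c) (Ps i) (Qs i)) →
      Enc f (.branch x I Ps) (.input (f x) [y] (.pcase (.ch y) I (fun _ => c) Qs))
  | res (f) (x y c : Name) (P : SProc) (Q : PProc) :
      c ∉ f '' (SProc.fn (.res x y P)) → c ∉ SProc.fn (.res x y P) →
      Enc (fupd (fupd f x c) y c) P Q →
      Enc f (.res x y P) (.res c Q)
  | par (f) (P₁ P₂ : SProc) (Q₁ Q₂ : PProc) :
      Enc f P₁ Q₁ → Enc f P₂ Q₂ →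
      Enc f (.par P₁ P₂) (.par Q₁ Q₂)

/-! ## Encoding of session types into usage types -/

mutual
/-- The encoding ⟦·⟧_su of session types into usage types (Dardha et al.),
with canonical obligation/capability annotations. -/
def encSU : SType → UType
  | .endT => .chan .empty []
  | .recv T S => .chan (.inp 0 0 .empty) [encSU T, encSU S]
  | .send T S => .chan (.out 0 0 .empty) [encSU T, encSUd S]
  | .branchT I S => .chan (.inp 0 0 .empty) [.variant I (fun i => encSU (S i))]
  | .selectT I S => .chan (.out 0 0 .empty) [.variant I (fun i => encSUd (S i))]

/-- `encSUd T` is ⟦T̄⟧_su, the encoding of the dual of `T`. -/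
def encSUd : SType → UType
  | .endT => .chan .empty []
  | .recv T S => .chan (.out 0 0 .empty) [encSU T, encSU S]
  | .send T S => .chan (.inp 0 0 .empty) [encSU T, encSUd S]
  | .branchT I S => .chan (.out 0 0 .empty) [.variant I (fun i => encSU (S i))]
  | .selectT I S => .chan (.inp 0 0 .empty) [.variant I (fun i => encSUd (S i))]
end

/-- Duality on usages: exchange ? and !. -/
def Usage.dualU : Usage → Usage
  | .empty => .empty
  | .inp o κ U => .out o κ U.dualU
  | .out o κ U => .inp o κ U.dualU
  | .par U V => .par U.dualU V.dualU

/-- Duality on usage types: exchange ? and ! in the top-level usage,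
leaving the carried types unchanged. -/
def UType.dual : UType → UType
  | .chan U Ts => .chan U.dualU Ts
  | .variant I Ts => .variant I Ts

/-- The top-level usage of a usage type. -/
def UType.topUsage : UType → Usage
  | .chan U _ => U
  | .variant _ _ => .empty

/-- Encoding ⟦Γ⟧_f of a session typing context into a usage typing context. -/
def EncCtx (f : Name → Name) (Γ : Ctx) (Δ : UCtx) : Prop :=
  (∀ x T, Γ x = some T → Δ (f x) = some (encSU T)) ∧
  (∀ y, (∀ x, Γ x ≠ none → f x ≠ y) → Δ y = none)

/-- The class K_n of deadlock-free session processes: session-typable processes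
whose encoding is typable in Kobayashi's system with degree of sharing n. -/
def Koba (n : ℕ) (P : SProc) : Prop :=
  ∃ (Γ : Ctx) (f : Name → Name) (Q : PProc) (Δ : UCtx),
    STyped Γ P ∧ Enc f P Q ∧ EncCtx f Γ Δ ∧ KBTyped n Δ Q

end Paper

namespace Paper

/-- The process P₂ = (νa₁b₁)(νa₂b₂)(a₁(x).ā₂⟨x⟩ | b̄₁⟨n⟩.b₂(z)), with
a₁ = 0, b₁ = 1, a₂ = 2, b₂ = 3, x = 4, n = 5, z = 6. -/
def Ptwo : SProc :=
  .res 0 1 (.res 2 3 (.par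
    (.input 0 4 (.output 2 4 .nil))
    (.output 1 5 (.input 3 6 .nil))))

/-!
K₁ ⊆ K₂ because the side condition of the parallel rule is monotone in the degree of sharing.

In ⟦P₂⟧ each of the two parallel components uses both continuation channels: the left one
receives on f(a₁) and then sends on f(a₂), the right one sends on f(b₁) = f(a₁) and then
receives on f(b₂) = f(a₂). Free names of a typed process are declared in its context, so the
parallel rule shares two channels and P₂ ∉ K₁, while an explicit derivation with degree of
sharing 2 puts P₂ in K₂.
-/

theorem KBTyped.mono {m n : ℕ} (hmn : m ≤ n) {Γ : UCtx} {P : PProc} (h : KBTyped m Γ P) :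
    KBTyped n Γ P := by
  induction h with
  | nil h => exact .nil h
  | input x zs o κ Ts h₁ h₂ h₃ h₄ h₅ _ ih => exact .input x zs o κ Ts h₁ h₂ h₃ h₄ h₅ ih
  | output x vs o κ Ts h₁ _ h₃ h₄ ih => exact .output x vs o κ Ts h₁ ih h₃ h₄
  | par hc hfin hcard _ _ ih₁ ih₂ => exact .par hc hfin (hcard.trans hmn) ih₁ ih₂
  | res x U Ts h₁ h₂ _ ih => exact .res x U Ts h₁ h₂ ih
  | pcase v I xs Ps Ts h₁ h₂ h₃ _ ih => exact .pcase v I xs Ps Ts h₁ h₂ h₃ ih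

namespace Usage

-- `con` only depends on the top-level actions, and a reduction consumes one input and one
-- output among them.
def acts : Usage → Multiset (Bool × ℕ × ℕ × Usage)
  | .empty => 0
  | .inp o κ U => {(true, o, κ, U)}
  | .out o κ U => {(false, o, κ, U)}
  | .par U V => U.acts + V.acts

theorem UCong.acts_eq {U V : Usage} (h : UCong U V) : U.acts = V.acts := by
  induction h with
  | refl | unit => simp [acts]
  | symm _ ih => exact ih.symm
  | trans _ _ ih₁ ih₂ => exact ih₁.trans ih₂
  | comm => simp [acts, add_comm]
  | assoc => simp [acts, add_assoc]
  | parCong _ _ ih₁ ih₂ => simp [acts, ih₁, ih₂]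

theorem URed.acts_eq {U V : Usage} (h : URed U V) :
    ∃ (o κ o' κ' : ℕ) (U₁ U₂ : Usage) (R : Multiset (Bool × ℕ × ℕ × Usage)),
      U.acts = (true, o, κ, U₁) ::ₘ (false, o', κ', U₂) ::ₘ R ∧
      V.acts = U₁.acts + U₂.acts + R := by
  induction h with
  | comm o κ o' κ' U₁ U₂ => exact ⟨o, κ, o', κ', U₁, U₂, 0, by simp [acts], by simp [acts]⟩
  | @parL _ _ W _ ih =>
    obtain ⟨o, κ, o', κ', U₁, U₂, R, hU, hV⟩ := ih
    exact ⟨o, κ, o', κ', U₁, U₂, R + W.acts, by simp [acts, hU], by simp [acts, hV, add_assoc]⟩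
  | str hU _ hV ih =>
    obtain ⟨o, κ, o', κ', U₁, U₂, R, hU', hV'⟩ := ih
    exact ⟨o, κ, o', κ', U₁, U₂, R, hU.acts_eq ▸ hU', hV.acts_eq ▸ hV'⟩

theorem obIn_eq_inf (U : Usage) :
    U.obIn = (U.acts.map fun a => if a.1 then (a.2.1 : ℕ∞) else ⊤).inf := by
  induction U <;> simp [obIn, acts, *]

theorem obOut_eq_inf (U : Usage) :
    U.obOut = (U.acts.map fun a => if a.1 then ⊤ else (a.2.1 : ℕ∞)).inf := by
  induction U <;> simp [obOut, acts, *]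

theorem capIn_eq_inf (U : Usage) :
    U.capIn = (U.acts.map fun a => if a.1 then (a.2.2.1 : ℕ∞) else ⊤).inf := by
  induction U <;> simp [capIn, acts, *]

theorem capOut_eq_inf (U : Usage) :
    U.capOut = (U.acts.map fun a => if a.1 then ⊤ else (a.2.2.1 : ℕ∞)).inf := by
  induction U <;> simp [capOut, acts, *]

theorem con_iff_of_acts_eq {U V : Usage} (h : U.acts = V.acts) : U.con ↔ V.con := by
  simp only [con, obIn_eq_inf, obOut_eq_inf, capIn_eq_inf, capOut_eq_inf, h]

theorem con_empty : Usage.con .empty := by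
  simp [con, obIn, obOut, capIn, capOut]

theorem rel_empty : Usage.rel .empty := by
  intro V hV
  rcases hV.cases_head with rfl | ⟨W, hW, -⟩
  · exact con_empty
  · obtain ⟨_, _, _, _, _, _, _, h, -⟩ := hW.acts_eq
    exact absurd h.symm Multiset.cons_ne_zero

theorem rel_of_acts_eq_pair {o κ o' κ' : ℕ} (h₁ : o' ≤ κ) (h₂ : o ≤ κ') {U : Usage}
    (hU : U.acts = {(true, o, κ, .empty), (false, o', κ', .empty)}) : U.rel := by
  have reach : ∀ V, Relation.ReflTransGen URed U V → V.acts = U.acts ∨ V.acts = 0 := by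
    intro V hV
    induction hV with
    | refl => exact .inl rfl
    | tail _ hstep ih =>
      obtain ⟨_, _, _, _, U₁, U₂, R, hV, hW⟩ := hstep.acts_eq
      rcases ih with ih | ih
      · rw [ih, hU] at hV
        have hR : R = 0 := by simpa using congrArg Multiset.card hV
        have hconts : ({U₁, U₂} : Multiset Usage) = {.empty, .empty} := by
          simpa [hR] using (congrArg (Multiset.map fun a => a.2.2.2) hV).symm
        have h₁ : U₁ ∈ ({.empty, .empty} : Multiset Usage) := hconts ▸ by simp
        have h₂ : U₂ ∈ ({.empty, .empty} : Multiset Usage) := hconts ▸ by simp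
        simp only [Multiset.insert_eq_cons, Multiset.mem_cons, Multiset.mem_singleton,
          or_self] at h₁ h₂
        simp [hW, h₁, h₂, hR, acts]
      · exact absurd (ih ▸ hV).symm Multiset.cons_ne_zero
  intro V hV
  rcases reach V hV with h | h
  · rw [con_iff_of_acts_eq h, con, obIn_eq_inf, obOut_eq_inf, capIn_eq_inf, capOut_eq_inf, hU]
    simpa using ⟨h₁, h₂⟩
  · exact (con_iff_of_acts_eq (h.trans rfl)).2 con_empty

theorem not_rel_inp (o κ : ℕ) (U : Usage) : ¬ (Usage.inp o κ U).rel := fun h => by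
  simpa [con, obOut, capIn] using h _ .refl

end Usage

def UType.emptyChan : UType := .chan .empty []

theorem CompC.apply_ne_none_iff {Γ₁ Γ₂ Γ : UCtx} (h : CompC Γ₁ Γ₂ Γ) (x : Name) :
    Γ x ≠ none ↔ Γ₁ x ≠ none ∨ Γ₂ x ≠ none := by
  rcases h x with ⟨h₁, h₂, h⟩ | ⟨_, h₁, h₂, h⟩ | ⟨_, h₁, h₂, h⟩ | ⟨_, _, _, h₁, h₂, -, h⟩ <;>
    simp [h₁, h₂, h]

theorem CompC.apply_of_left_eq_none {Γ₁ Γ₂ Γ : UCtx} (h : CompC Γ₁ Γ₂ Γ) {x : Name}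
    (hx : Γ₁ x = none) : Γ x = Γ₂ x := by
  rcases h x with ⟨-, h₂, h⟩ | ⟨_, h₁, -⟩ | ⟨_, -, h₂, h⟩ | ⟨_, _, _, h₁, -⟩ <;>
    simp_all

theorem VTyped.apply_ne_none_iff {Γ : UCtx} {v : Val} {T : UType} (h : VTyped Γ v T)
    (y : Name) : Γ y ≠ none ↔ y ∈ v.fv := by
  induction h with
  | ch x T hx hy =>
    by_cases hxy : y = x
    · simp [hxy, hx, Val.fv]
    · simp [hy y hxy, hxy, Val.fv]
  | variant _ _ _ _ _ ih => exact ih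

theorem VTypedList.apply_ne_none_iff {Γ : UCtx} {vs : List Val} {Ts : List UType}
    (h : VTypedList Γ vs Ts) (y : Name) : Γ y ≠ none ↔ ∃ v ∈ vs, y ∈ v.fv := by
  induction h with
  | nil h => simp [h]
  | cons hc hv _ ih => simp [hc.apply_ne_none_iff, hv.apply_ne_none_iff, ih]

theorem VTypedList.pair {x y : Name} (h : x ≠ y) (T T' : UType) :
    VTypedList ((UCtx.empty.update x (some T)).update y (some T')) [.ch x, .ch y] [T, T'] := by
  refine .cons (Γ₁ := UCtx.empty.update x (some T)) (Γ₂ := UCtx.empty.update y (some T'))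
    ?_ (.ch x T (by simp [UCtx.update]) fun z hz => by simp [UCtx.update, hz, UCtx.empty])
    (.cons (Γ₁ := UCtx.empty.update y (some T')) (Γ₂ := UCtx.empty) ?_
      (.ch y T' (by simp [UCtx.update]) fun z hz => by simp [UCtx.update, hz, UCtx.empty])
      (.nil fun _ => rfl))
  all_goals
    intro z
    simp only [UCtx.update, UCtx.empty]
    split_ifs <;> simp_all

theorem seqCtx_apply_of_ne {x y : Name} (b : Bool) (o κ : ℕ) (Ts : List UType) (Γ : UCtx)
    (hy : y ≠ x) : seqCtx x b o κ Ts Γ y = (Γ y).map (UType.lift (κ + 1)) := by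
  simp [seqCtx, hy]

theorem seqCtx_update_of_ne {x y : Name} {b : Bool} {o κ : ℕ} {Ts : List UType} {Γ : UCtx}
    {T : UType} (hy : y ≠ x) (hT : T.lift (κ + 1) = T) :
    (seqCtx x b o κ Ts Γ).update y (some T) = seqCtx x b o κ Ts (Γ.update y (some T)) := by
  funext z
  by_cases hz : z = y
  · subst hz; simp [seqCtx, UCtx.update, hy, hT]
  · simp [seqCtx, UCtx.update, hz, UCtx.usageAt, Ne.symm hy]

theorem seqCtx_apply_ne_none_iff {x y : Name} {b : Bool} {o κ : ℕ} {Ts : List UType}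
    {Γ : UCtx} : seqCtx x b o κ Ts Γ y ≠ none ↔ y = x ∨ Γ y ≠ none := by
  by_cases hy : y = x <;> simp [seqCtx, hy]

theorem UCtx.extendList_apply_of_not_mem {Γ : UCtx} {zs : List Name} {Ts : List UType}
    {x : Name} (hx : x ∉ zs) : Γ.extendList zs Ts x = Γ x := by
  induction zs generalizing Γ Ts with
  | nil => rfl
  | cons z zs ih =>
    cases Ts with
    | nil => rfl
    | cons T Ts =>
      simp only [List.mem_cons, not_or] at hx
      exact (ih hx.2).trans (if_neg hx.1)

namespace KBTyped

variable {n : ℕ} {Γ : UCtx}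

theorem apply_ne_none_of_mem_fn {P : PProc} (h : KBTyped n Γ P) {x : Name}
    (hx : x ∈ P.fn) : Γ x ≠ none := by
  induction h generalizing x with
  | nil => simp [PProc.fn] at hx
  | input y zs o κ Ts _ _ _ _ _ _ ih =>
    simp only [PProc.fn, Set.mem_union, Set.mem_singleton_iff, Set.mem_sdiff,
      Set.mem_ofPred_eq] at hx
    rcases hx with rfl | ⟨hx, hxzs⟩
    · simp [seqCtx]
    · exact seqCtx_apply_ne_none_iff.2 (.inr (UCtx.extendList_apply_of_not_mem hxzs ▸ ih hx :))
  | output y vs o κ Ts hvs _ hc _ ih =>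
    simp only [PProc.fn, Set.mem_union, Set.mem_singleton_iff, Set.mem_iUnion,
      exists_prop] at hx
    refine seqCtx_apply_ne_none_iff.2 ?_
    rcases hx with (rfl | hx) | hx
    · exact .inl rfl
    · exact .inr ((hc.apply_ne_none_iff x).2 (.inl ((hvs.apply_ne_none_iff x).2 hx)))
    · exact .inr ((hc.apply_ne_none_iff x).2 (.inr (ih hx)))
  | par hc _ _ _ _ ih₁ ih₂ =>
    rcases hx with hx | hx
    · exact (hc.apply_ne_none_iff x).2 (.inl (ih₁ hx))
    · exact (hc.apply_ne_none_iff x).2 (.inr (ih₂ hx))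
  | res y U Ts _ _ _ ih =>
    obtain ⟨hx, hxy⟩ := hx
    simpa [UCtx.update, show x ≠ y from hxy] using ih hx
  | pcase v I xs Ps Ts hv hc _ _ ih =>
    simp only [PProc.fn, Set.mem_union, Set.mem_iUnion, Set.mem_sdiff,
      Set.mem_singleton_iff, exists_prop] at hx
    rcases hx with hx | ⟨i, hi, hx, hxi⟩
    · exact (hc.apply_ne_none_iff x).2 (.inl ((hv.apply_ne_none_iff x).2 hx))
    · exact (hc.apply_ne_none_iff x).2 (.inr (by simpa [UCtx.update, hxi] using ih i hi hx))

theorem nil_of_forall_eq_emptyChan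
    (h : ∀ x T, Γ x = some T → T = .emptyChan) : KBTyped n Γ .nil :=
  .nil fun x T hx => ⟨.empty, [], h x T hx, trivial⟩

theorem res_inv {x : Name} {P : PProc} (h : KBTyped n Γ (.res x P)) :
    ∃ (U : Usage) (Ts : List UType), Γ x = none ∧ U.rel ∧
      KBTyped n (Γ.update x (some (.chan U Ts))) P := by
  cases h
  exact ⟨_, _, ‹_›, ‹_›, ‹_›⟩

theorem par_inv {P Q : PProc} (h : KBTyped n Γ (.par P Q)) :
    ∃ Γ₁ Γ₂ : UCtx, CompC Γ₁ Γ₂ Γ ∧ (UCtx.shared Γ₁ Γ₂).Finite ∧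
      (UCtx.shared Γ₁ Γ₂).ncard ≤ n ∧ KBTyped n Γ₁ P ∧ KBTyped n Γ₂ Q := by
  cases h
  exact ⟨_, _, ‹_›, ‹_›, ‹_›, ‹_›, ‹_›⟩

theorem exists_inp_of_input {x : Name} {zs : List Name} {P : PProc}
    (h : KBTyped n Γ (.input x zs P)) :
    ∃ (o κ : ℕ) (U : Usage) (Ts : List UType), Γ x = some (.chan (.inp o κ U) Ts) := by
  cases h
  exact ⟨_, _, _, _, if_pos rfl⟩

theorem apply_eq_none_of_input_binder {x z : Name} {zs : List Name} {P : PProc}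
    (h : KBTyped n Γ (.input x zs P)) (hz : z ∈ zs) : Γ z = none := by
  cases h with
  | input _ _ _ _ _ _ hx hzs =>
    rw [seqCtx_apply_of_ne _ _ _ _ _ (ne_of_mem_of_not_mem hz hx), hzs z hz]
    rfl

theorem exists_lift_of_output {x : Name} {vs : List Val} {P : PProc}
    (h : KBTyped n Γ (.output x vs P)) :
    ∃ (Γ' : UCtx) (t : ℕ), KBTyped n Γ' P ∧
      ∀ y, y ≠ x → (∀ v ∈ vs, y ∉ v.fv) → Γ y = (Γ' y).map (UType.lift t) := by
  cases h with
  | output _ _ _ κ _ hvs hP hc =>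
    refine ⟨_, κ + 1, hP, fun y hyx hyvs => ?_⟩
    have hy : _ = none := not_not.1 (mt (hvs.apply_ne_none_iff y).1 (by simpa using hyvs))
    rw [seqCtx_apply_of_ne _ _ _ _ _ hyx, hc.apply_of_left_eq_none hy]

end KBTyped

-- ⟦P₂⟧ with continuation channels c₁ for (a₁, b₁) and c₂ for (a₂, b₂), and c, d, e, c' for
-- the continuations created at the four prefixes.
def encPtwo (c₁ c₂ c d e c' : Name) : PProc :=
  .res c₁ (.res c₂ (.par
    (.input c₁ [4, c] (.res d (.output c₂ [.ch 4, .ch d] .nil)))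
    (.res e (.output c₁ [.ch 5, .ch e] (.input c₂ [6, c'] .nil)))))

theorem enc_Ptwo_inv {f : Name → Name} {Q : PProc} (h : Enc f Ptwo Q) :
    ∃ c₁ c₂ c d e c' : Name, c₂ ≠ c₁ ∧ c ≠ c₂ ∧ d ≠ c₂ ∧ e ≠ c₁ ∧ e ≠ c₂ ∧
      Q = encPtwo c₁ c₂ c d e c' := by
  cases h with | res _ _ _ c₁ _ _ _ _ h =>
  cases h with | res _ _ _ c₂ _ _ hc₂ _ h =>
  cases h with | par _ _ _ _ _ hA hB =>
  cases hA with | input _ _ _ c _ _ hc _ _ hA =>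
  cases hA with | output _ _ _ d _ _ hd _ hA =>
  cases hA
  cases hB with | output _ _ _ e _ _ he _ hB =>
  cases hB with | input _ _ _ c' _ _ _ _ _ hB =>
  cases hB
  refine ⟨c₁, c₂, c, d, e, c', ?_, ?_, ?_, ?_, ?_, rfl⟩
  · exact fun h => hc₂ ⟨0, by simp [SProc.fn], by simp [fupd, h]⟩
  · exact fun h => hc ⟨2, by simp [SProc.fn], by simp [fupd, h]⟩
  · exact fun h => hd ⟨2, by simp [SProc.fn], by simp [fupd, h]⟩
  · exact fun h => he ⟨1, by simp [SProc.fn], by simp [fupd, h]⟩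
  · exact fun h => he ⟨3, by simp [SProc.fn], by simp [fupd, h]⟩

-- If the encoding picks the name 4 bound by the left input as c₂, the left output goes to that
-- bound name, so the restricted channel 4 only carries the right component's input.
theorem not_kbTyped_encPtwo_four {n : ℕ} {Δ : UCtx} {c₁ c d e c' : Name} (h₁ : c₁ ≠ 4)
    (he : e ≠ 4) : ¬ KBTyped n Δ (encPtwo c₁ 4 c d e c') := by
  intro h
  obtain ⟨_, _, -, -, h⟩ := h.res_inv
  obtain ⟨U, Ts, -, hrel, h⟩ := h.res_inv
  obtain ⟨Γ₁, Γ₂, hc, -, -, hA, hB⟩ := h.par_inv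
  obtain ⟨_, _, -, -, hB⟩ := hB.res_inv
  obtain ⟨Γ', t, hB, hΓ₂⟩ := hB.exists_lift_of_output
  obtain ⟨o, κ, V, Ts', hV⟩ := hB.exists_inp_of_input
  have h4 := hΓ₂ 4 h₁.symm (by simp [Val.fv, he.symm])
  simp only [UCtx.update, if_neg he.symm, hV, Option.map_some, UType.lift, Usage.lift] at h4
  have hU := hc.apply_of_left_eq_none (hA.apply_eq_none_of_input_binder (by simp : 4 ∈ [4, c]))
  simp only [UCtx.update, if_pos, h4, Option.some.injEq, UType.chan.injEq] at hU
  exact Usage.not_rel_inp _ _ _ (hU.1 ▸ hrel)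

theorem two_le_of_kbTyped_encPtwo {n : ℕ} {Δ : UCtx} {c₁ c₂ c d e c' : Name}
    (h₂₁ : c₂ ≠ c₁) (hc : c ≠ c₂) (hd : d ≠ c₂) (he₁ : e ≠ c₁) (he₂ : e ≠ c₂)
    (h : KBTyped n Δ (encPtwo c₁ c₂ c d e c')) : 2 ≤ n := by
  by_cases h₄ : c₂ = 4
  · subst h₄
    exact absurd h (not_kbTyped_encPtwo_four h₂₁.symm he₂)
  obtain ⟨_, _, -, -, h⟩ := h.res_inv
  obtain ⟨_, _, -, -, h⟩ := h.res_inv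
  obtain ⟨Γ₁, Γ₂, -, hfin, hcard, hA, hB⟩ := h.par_inv
  have hshared : {c₁, c₂} ⊆ UCtx.shared Γ₁ Γ₂ := by
    rintro x (rfl | rfl)
    · exact ⟨hA.apply_ne_none_of_mem_fn (by simp [PProc.fn]),
        hB.apply_ne_none_of_mem_fn (by simp [PProc.fn, he₁.symm])⟩
    · exact ⟨hA.apply_ne_none_of_mem_fn (by simp [PProc.fn, Val.fv, h₄, hc.symm, hd.symm]),
        hB.apply_ne_none_of_mem_fn (by simp [PProc.fn, he₂.symm])⟩
  calc 2 = ({c₁, c₂} : Set Name).ncard := (Set.ncard_pair h₂₁.symm).symm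
    _ ≤ (UCtx.shared Γ₁ Γ₂).ncard := Set.ncard_le_ncard hshared hfin
    _ ≤ n := hcard

theorem not_koba_one_Ptwo : ¬ Koba 1 Ptwo := by
  rintro ⟨_, _, _, _, -, hEnc, -, hKB⟩
  obtain ⟨_, _, _, _, _, _, h₂₁, hc, hd, he₁, he₂, rfl⟩ := enc_Ptwo_inv hEnc
  exact absurd (two_le_of_kbTyped_encPtwo h₂₁ hc hd he₁ he₂ hKB) (by decide)

section EncPtwoTyping

local notation "Tε" => UType.emptyChan

theorem kbTyped_encPtwo_left {n : ℕ} :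
    KBTyped n (seqCtx 7 true 0 0 [Tε, Tε] (seqCtx 8 false 0 1 [Tε, Tε] UCtx.empty))
      (.input 7 [4, 9] (.res 10 (.output 8 [.ch 4, .ch 10] .nil))) := by
  refine .input _ _ _ _ _ (by decide) (by decide) (by simp [seqCtx, UCtx.empty]) rfl
    (by simp [UCtx.carriesOK, seqCtx, UCtx.empty]) ?_
  refine .res 10 .empty [] (by simp [seqCtx, UCtx.extendList, UCtx.update, UCtx.empty])
    Usage.rel_empty ?_
  simp only [UCtx.extendList, List.zip_cons_cons, List.zip_nil_right, List.foldl_cons,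
    List.foldl_nil]
  rw [seqCtx_update_of_ne (by decide) rfl, seqCtx_update_of_ne (by decide) rfl,
    seqCtx_update_of_ne (by decide) rfl]
  refine .output (Γ₁ := (UCtx.empty.update 4 (some Tε)).update 10 (some Tε))
    (Γ₂ := UCtx.empty.update 9 (some Tε))
    _ _ _ _ _ (.pair (by decide) _ _) (.nil_of_forall_eq_emptyChan ?_) ?_ ?_
  · intro x T hx
    simp only [UCtx.update, UCtx.empty] at hx
    split_ifs at hx
    simp_all
  · intro x
    simp only [UCtx.update, UCtx.empty]
    split_ifs <;> simp_all [UType.emptyChan]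
  · simp [UCtx.carriesOK, UCtx.update, UCtx.empty]

theorem kbTyped_encPtwo_right {n : ℕ} :
    KBTyped n (seqCtx 7 false 0 0 [Tε, Tε]
        (seqCtx 8 true 0 1 [Tε, Tε] (UCtx.empty.update 5 (some Tε))))
      (.res 11 (.output 7 [.ch 5, .ch 11] (.input 8 [6, 12] .nil))) := by
  refine .res 11 .empty [] (by simp [seqCtx, UCtx.update, UCtx.empty]) Usage.rel_empty ?_
  rw [seqCtx_update_of_ne (by decide) rfl, seqCtx_update_of_ne (by decide) rfl]
  refine .output (Γ₁ := (UCtx.empty.update 5 (some Tε)).update 11 (some Tε))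
    (Γ₂ := seqCtx 8 true 0 1 [Tε, Tε] UCtx.empty)
    _ _ _ _ _ (.pair (by decide) _ _) ?_ ?_ ?_
  · refine .input _ _ _ _ _ (by decide) (by decide) (by simp [UCtx.empty]) rfl
      (by simp [UCtx.carriesOK, UCtx.empty]) (.nil_of_forall_eq_emptyChan ?_)
    intro x T hx
    simp only [UCtx.extendList, List.zip_cons_cons, List.zip_nil_right, List.foldl_cons,
      List.foldl_nil, UCtx.update, UCtx.empty] at hx
    split_ifs at hx <;> simp_all
  · intro x
    simp only [seqCtx, UCtx.update, UCtx.empty, UCtx.usageAt]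
    split_ifs <;> simp_all [UType.emptyChan, UType.lift, Usage.lift]
  · simp [UCtx.carriesOK, seqCtx, UCtx.update, UCtx.empty]

theorem kbTyped_encPtwo :
    KBTyped 2 (UCtx.empty.update 5 (some Tε)) (encPtwo 7 8 9 10 11 12) := by
  refine .res 7 (.par (.inp 0 0 .empty) (.out 0 0 .empty)) [Tε, Tε]
    (by simp [UCtx.update, UCtx.empty]) (Usage.rel_of_acts_eq_pair le_rfl le_rfl rfl) ?_
  refine .res 8 (.par (.out 1 1 .empty) (.inp 1 1 .empty)) [Tε, Tε]
    (by simp [UCtx.update, UCtx.empty])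
    (Usage.rel_of_acts_eq_pair le_rfl le_rfl (Multiset.pair_comm _ _)) ?_
  have hshared : UCtx.shared (seqCtx 7 true 0 0 [Tε, Tε] (seqCtx 8 false 0 1 [Tε, Tε] UCtx.empty))
      (seqCtx 7 false 0 0 [Tε, Tε] (seqCtx 8 true 0 1 [Tε, Tε] (UCtx.empty.update 5 (some Tε))))
      ⊆ {7, 8} := by
    rintro x ⟨hx, -⟩
    by_contra h
    simp only [Set.mem_insert_iff, Set.mem_singleton_iff, not_or] at h
    simp [seqCtx, UCtx.empty, h.1, h.2] at hx
  refine .par ?_ (Set.toFinite {7, 8} |>.subset hshared)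
    ((Set.ncard_le_ncard hshared (Set.toFinite _)).trans (Set.ncard_pair (by decide)).le)
    kbTyped_encPtwo_left kbTyped_encPtwo_right
  intro x
  simp only [seqCtx, UCtx.update, UCtx.empty, UCtx.usageAt]
  split_ifs <;> simp_all [CompT.chan, UType.emptyChan, UType.lift, Usage.lift]

end EncPtwoTyping

def Ctx.empty : Ctx := fun _ => none

theorem enc_Ptwo : Enc id Ptwo (encPtwo 7 8 9 10 11 12) := by
  refine .res _ 0 1 7 _ _ (by simp [SProc.fn]) (by simp [SProc.fn]) ?_
  refine .res _ 2 3 8 _ _ (by simp [SProc.fn, fupd]) (by simp [SProc.fn]) ?_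
  refine .par _ _ _ _ _ ?_ ?_
  · refine .input _ 0 4 9 _ _ (by simp [SProc.fn, fupd]) (by simp [SProc.fn]) (by decide) ?_
    exact .output _ 2 4 10 _ _ (by simp [SProc.fn, fupd]) (by simp [SProc.fn]) (.nil _)
  · refine .output _ 1 5 11 _ _ (by simp [SProc.fn, fupd]) (by simp [SProc.fn]) ?_
    exact .input _ 3 6 12 _ _ (by simp [SProc.fn, fupd]) (by simp [SProc.fn]) (by decide) (.nil _)

theorem encCtx_Ptwo :
    EncCtx id (Ctx.empty.update 5 (some .endT)) (UCtx.empty.update 5 (some .emptyChan)) := by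
  constructor
  · intro x T hx
    simp only [Ctx.update, Ctx.empty] at hx
    split_ifs at hx with h
    obtain rfl := Option.some.inj hx
    simp [UCtx.update, h, encSU, UType.emptyChan]
  · intro y hy
    have : y ≠ 5 := (hy 5 (by simp [Ctx.update])).symm
    simp [UCtx.update, UCtx.empty, this]

theorem styped_Ptwo : STyped (Ctx.empty.update 5 (some .endT)) Ptwo := by
  refine .res 0 1 (.recv .endT .endT) (by simp [Ctx.update, Ctx.empty])
    (by simp [Ctx.update, Ctx.empty]) (by decide) ?_
  refine .res 2 3 (.send .endT .endT) (by simp [Ctx.update, Ctx.empty])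
    (by simp [Ctx.update, Ctx.empty]) (by decide) ?_
  refine .par (Γ₁ := (Ctx.empty.update 0 (some (.recv .endT .endT))).update 2
      (some (.send .endT .endT)))
    (Γ₂ := (((Ctx.empty.update 5 (some .endT)).update 1
      (some (.send .endT .endT))).update 3 (some (.recv .endT .endT)))) ?_ ?_ ?_
  · intro x
    simp only [Ctx.update, Ctx.empty]
    split_ifs <;> simp_all [SType.dual]
  · refine .input 0 4 .endT .endT (by simp [Ctx.update]) (by decide)
      (by simp [Ctx.update, Ctx.empty]) ?_
    refine .output 2 4 .endT .endT (by simp [Ctx.update]) (by decide) (by simp [Ctx.update])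
      (.nil ?_)
    intro x T hx
    simp only [Ctx.update, Ctx.empty] at hx
    split_ifs at hx <;> simp_all
  · refine .output 1 5 .endT .endT (by simp [Ctx.update]) (by decide) (by simp [Ctx.update]) ?_
    refine .input 3 6 .endT .endT (by simp [Ctx.update]) (by decide)
      (by simp [Ctx.update, Ctx.empty]) (.nil ?_)
    intro x T hx
    simp only [Ctx.update, Ctx.empty] at hx
    split_ifs at hx <;> simp_all

theorem koba_two_Ptwo : Koba 2 Ptwo :=
  ⟨_, id, _, _, styped_Ptwo, enc_Ptwo, encCtx_Ptwo, kbTyped_encPtwo⟩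

/-- K₁ ⊂ K₂, witnessed by P₂. -/
theorem K1_strict_subset_K2 :
    (∀ P : SProc, Koba 1 P → Koba 2 P) ∧ Koba 2 Ptwo ∧ ¬ Koba 1 Ptwo := by
  refine ⟨?_, koba_two_Ptwo, not_koba_one_Ptwo⟩
  rintro P ⟨Γ, f, Q, Δ, hST, hEnc, hCtx, hKB⟩
  exact ⟨Γ, f, Q, Δ, hST, hEnc, hCtx, hKB.mono one_le_two⟩

end Paper
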